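/- If {(X_n,Y_n,Z_n)} is a stationary k-th order Markov chain and {(Y_n,Z_n)} is also a k-th order Markov chain, then for every j ≥ k, I(Y_0 ; X_{-k}^0 | Y_{-k}^{-1}, Z_{-k}^0) = I(Y_0 ; X_{-j}^0 | Y_{-j}^{-1}, Z_{-j}^0). -/
import Mathlib


open MeasureTheory Real Filter Topology

namespace CCDI

variable {Ω : Type*} [MeasurableSpace Ω]

/-- The probability of an event as a real number. -/
noncomputable def pr (μ : Measure Ω) (s : Set Ω) : ℝ := (μ s).toReal

/-- Shannon entropy (natural log) of a finite-valued random variable. -/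
noncomputable def entH {S : Type*} [Fintype S] (μ : Measure Ω) (X : Ω → S) : ℝ :=
  -∑ s : S, pr μ (X ⁻¹' {s}) * Real.log (pr μ (X ⁻¹' {s}))

/-- Conditional Shannon entropy `H(X | Y) = H(X, Y) - H(Y)`. -/
noncomputable def condH {S T : Type*} [Fintype S] [Fintype T]
    (μ : Measure Ω) (X : Ω → S) (Y : Ω → T) : ℝ :=
  entH μ (fun ω => (X ω, Y ω)) - entH μ Y

/-- Conditional mutual information `I(X ; Y | Z) = H(X|Z) + H(Y|Z) - H(X,Y|Z)`. -/
noncomputable def cmi {S T U : Type*} [Fintype S] [Fintype T] [Fintype U]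
    (μ : Measure Ω) (X : Ω → S) (Y : Ω → T) (Z : Ω → U) : ℝ :=
  condH μ X Z + condH μ Y Z - condH μ (fun ω => (X ω, Y ω)) Z

/-- `X` and `Y` are conditionally independent given `Z`. -/
def CondIndep {S T U : Type*} (μ : Measure Ω) (X : Ω → S) (Y : Ω → T) (Z : Ω → U) : Prop :=
  ∀ (x : S) (y : T) (z : U),
    pr μ (X ⁻¹' {x} ∩ Y ⁻¹' {y} ∩ Z ⁻¹' {z}) * pr μ (Z ⁻¹' {z}) =
      pr μ (X ⁻¹' {x} ∩ Z ⁻¹' {z}) * pr μ (Y ⁻¹' {y} ∩ Z ⁻¹' {z})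

/-- The block `X_1^m` of a process indexed by positive times. -/
def blk1 {S : Type*} (X : ℕ → Ω → S) (m : ℕ) : Ω → Fin m → S :=
  fun ω j => X ((j : ℕ) + 1) ω

/-- The block `X_a^{a+m-1}` of a two-sided process. -/
def blkZ {S : Type*} (X : ℤ → Ω → S) (a : ℤ) (m : ℕ) : Ω → Fin m → S :=
  fun ω j => X (a + (j : ℕ)) ω

/-- Directed information `I(X_1^n → Y_1^n) = ∑_{i=1}^n I(X_1^i ; Y_i | Y_1^{i-1})`. -/
noncomputable def DI {A B : Type*} [Fintype A] [Fintype B]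
    (μ : Measure Ω) (X : ℕ → Ω → A) (Y : ℕ → Ω → B) (n : ℕ) : ℝ :=
  ∑ i ∈ Finset.range n, cmi μ (blk1 X (i + 1)) (Y (i + 1)) (blk1 Y i)

/-- Causal conditional directed information
`I(X_1^n → Y_1^n ‖ Z_1^n) = ∑_{i=1}^n I(X_1^i ; Y_i | Y_1^{i-1}, Z_1^i)`. -/
noncomputable def ccdi1 {A B C : Type*} [Fintype A] [Fintype B] [Fintype C]
    (μ : Measure Ω) (X : ℕ → Ω → A) (Y : ℕ → Ω → B) (Z : ℕ → Ω → C) (n : ℕ) : ℝ :=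
  ∑ i ∈ Finset.range n,
    cmi μ (blk1 X (i + 1)) (Y (i + 1)) (fun ω => (blk1 Y i ω, blk1 Z (i + 1) ω))

/-- CCDI for a two-sided process, over times `1,…,n`. -/
noncomputable def ccdiZ {A B C : Type*} [Fintype A] [Fintype B] [Fintype C]
    (μ : Measure Ω) (X : ℤ → Ω → A) (Y : ℤ → Ω → B) (Z : ℤ → Ω → C) (n : ℕ) : ℝ :=
  ∑ i ∈ Finset.range n,
    cmi μ (blkZ X 1 (i + 1)) (Y ((i : ℤ) + 1)) (fun ω => (blkZ Y 1 i ω, blkZ Z 1 (i + 1) ω))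

/-- Stationarity of a (two-sided) process: the law of every finite window is
translation-invariant. -/
def Stationary {S : Type*} (μ : Measure Ω) (W : ℤ → Ω → S) : Prop :=
  ∀ (m : ℕ) (t : ℤ) (w : Fin m → S),
    pr μ {ω | ∀ j : Fin m, W (t + (j : ℕ)) ω = w j} =
      pr μ {ω | ∀ j : Fin m, W ((j : ℕ) : ℤ) ω = w j}

/-- The process `W` is a Markov chain of order at most `k`: `W_n` is conditionally
independent of any block of the past before time `n-k`, given `W_{n-k}^{n-1}`. -/
def MarkovOrder {S : Type*} (μ : Measure Ω) (W : ℤ → Ω → S) (k : ℕ) : Prop :=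
  ∀ (n : ℤ) (m : ℕ),
    CondIndep μ (W n) (fun ω (j : Fin m) => W (n - (k : ℤ) - (m : ℤ) + (j : ℕ)) ω)
      (fun ω (j : Fin k) => W (n - (k : ℤ) + (j : ℕ)) ω)

/-- The empirical (uniform) measure on sample indices `{0,…,n-1}`. -/
noncomputable def empμ (n : ℕ) : Measure (Fin n) := ((n : ENNReal))⁻¹ • Measure.count

/-- The plug-in estimator `Î_n^{(k)}(X → Y ‖ Z)` computed from a sample path:
the conditional mutual information `I(Y_0 ; X_{-k}^0 | Y_{-k}^{-1}, Z_{-k}^0)` under the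
empirical distribution of the overlapping `(k+1)`-blocks at times `1,…,n`. -/
noncomputable def plugIn {A B C : Type*} [Fintype A] [Fintype B] [Fintype C]
    (k n : ℕ) (x : ℤ → A) (y : ℤ → B) (z : ℤ → C) : ℝ :=
  cmi (empμ n) (fun i : Fin n => y ((i : ℤ) + 1))
    (fun (i : Fin n) (j : Fin (k + 1)) => x ((i : ℤ) + 1 - (k : ℤ) + (j : ℕ)))
    (fun i : Fin n =>
      ((fun j : Fin k => y ((i : ℤ) + 1 - (k : ℤ) + (j : ℕ))),
       (fun j : Fin (k + 1) => z ((i : ℤ) + 1 - (k : ℤ) + (j : ℕ)))))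

/-- The plug-in estimator evaluated on the sample path of the processes at `ω`. -/
noncomputable def plugInP {A B C : Type*} [Fintype A] [Fintype B] [Fintype C]
    (k n : ℕ) (X : ℤ → Ω → A) (Y : ℤ → Ω → B) (Z : ℤ → Ω → C) (ω : Ω) : ℝ :=
  plugIn k n (fun t => X t ω) (fun t => Y t ω) (fun t => Z t ω)

/-- The probability mass function of `f` under `μ`. -/
noncomputable def pmfOf {S : Type*} (μ : Measure Ω) (f : Ω → S) : S → ℝ :=
  fun s => pr μ (f ⁻¹' {s})

/-- Relative entropy (KL divergence) between two pmfs on a finite set. -/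
noncomputable def Dkl {S : Type*} [Fintype S] (P Q : S → ℝ) : ℝ :=
  ∑ s : S, P s * Real.log (P s / Q s)

/-- Shannon entropy of a pmf on a finite set. -/
noncomputable def entP {S : Type*} [Fintype S] (P : S → ℝ) : ℝ :=
  -∑ s : S, P s * Real.log (P s)

/-- The process `W` is time-homogeneous with `k`-th order transition function `Q`. -/
def HomMarkov {S : Type*} (μ : Measure Ω) (W : ℤ → Ω → S) (k : ℕ)
    (Q : (Fin k → S) → S → ℝ) : Prop :=
  ∀ (n : ℤ) (w : Fin k → S) (s : S),
    pr μ ({ω | ∀ j : Fin k, W (n - (k : ℤ) + (j : ℕ)) ω = w j} ∩ {ω | W n ω = s}) =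
      Q w s * pr μ {ω | ∀ j : Fin k, W (n - (k : ℤ) + (j : ℕ)) ω = w j}

open scoped Classical in
/-- The transition matrix of the lifted (first order) chain of `k`-blocks induced by a
`k`-th order transition function `Q`. -/
noncomputable def Qlift {S : Type*} (k : ℕ) (Q : (Fin k → S) → S → ℝ) :
    Matrix (Fin k → S) (Fin k → S) ℝ :=
  fun u v =>
    if h : (∀ (i : Fin k) (hi : (i : ℕ) + 1 < k), v i = u ⟨(i : ℕ) + 1, hi⟩) ∧ 0 < k then
      Q u (v ⟨k - 1, Nat.sub_lt h.2 Nat.one_pos⟩)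
    else 0

/-- Irreducibility and aperiodicity of a `k`-th order transition function, expressed as
primitivity of the lifted block-transition matrix. -/
def Primitive {S : Type*} [Fintype S] [DecidableEq S] (k : ℕ)
    (Q : (Fin k → S) → S → ℝ) : Prop :=
  ∃ N : ℕ, ∀ u v : Fin k → S, 0 < (Qlift k Q ^ N) u v


set_option maxHeartbeats 1000000

section AuxLemmas

variable {Ω : Type*} [MeasurableSpace Ω]

lemma pr_empty (μ : Measure Ω) : pr μ (∅ : Set Ω) = 0 := by simp [pr]

lemma pr_nonneg (μ : Measure Ω) (s : Set Ω) : 0 ≤ pr μ s := ENNReal.toReal_nonneg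

lemma pr_mono_null {μ : Measure Ω} {s t : Set Ω} (h : s ⊆ t) (ht : pr μ t = 0)
    [IsProbabilityMeasure μ] : pr μ s = 0 := by
  have hne : μ t ≠ ⊤ := (measure_lt_top μ t).ne
  have : μ t = 0 := by
    have := ENNReal.toReal_eq_zero_iff (μ t) |>.mp ht
    tauto
  have : μ s = 0 := measure_mono_null h this
  simp [pr, this]

lemma pr_le {μ : Measure Ω} [IsProbabilityMeasure μ] {s t : Set Ω} (h : s ⊆ t) :
    pr μ s ≤ pr μ t :=
  ENNReal.toReal_mono (measure_lt_top μ t).ne (measure_mono h)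

lemma pr_sum_fiber {S : Type*} [Fintype S] [MeasurableSpace S] [MeasurableSingletonClass S]
    {μ : Measure Ω} [IsProbabilityMeasure μ] {s : Set Ω} (hs : MeasurableSet s)
    {f : Ω → S} (hf : Measurable f) :
    pr μ s = ∑ a : S, pr μ (s ∩ f ⁻¹' {a}) := by
  classical
  have hcover : s = ⋃ a ∈ (Finset.univ : Finset S), s ∩ f ⁻¹' {a} := by
    ext ω; simp
  have hdisj : (↑(Finset.univ : Finset S) : Set S).PairwiseDisjoint
      (fun a => s ∩ f ⁻¹' {a}) := by
    intro a _ b _ hab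
    refine Set.disjoint_left.mpr ?_
    rintro ω ⟨-, ha⟩ ⟨-, hb⟩
    exact hab (by simpa using ha.symm.trans hb)
  have hmeas : ∀ a ∈ (Finset.univ : Finset S), MeasurableSet (s ∩ f ⁻¹' {a}) :=
    fun a _ => hs.inter (hf (measurableSet_singleton a))
  conv_lhs => rw [pr, hcover]
  rw [measure_biUnion_finset hdisj hmeas, ENNReal.toReal_sum (fun a _ => (measure_lt_top μ _).ne)]
  rfl

lemma pair_preimage {S T : Type*} (f : Ω → S) (g : Ω → T) (a : S) (b : T) :
    (fun ω => (f ω, g ω)) ⁻¹' {(a, b)} = f ⁻¹' {a} ∩ g ⁻¹' {b} := by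
  ext ω; simp [Prod.ext_iff]

lemma entH_comp_inj {S T : Type*} [Fintype S] [Fintype T] (μ : Measure Ω)
    (f : Ω → S) {e : S → T} (he : Function.Injective e) :
    entH μ (fun ω => e (f ω)) = entH μ f := by
  classical
  unfold entH
  classical
  congr 1
  have hpre : ∀ s : S, (fun ω => e (f ω)) ⁻¹' {e s} = f ⁻¹' {s} := by
    intro s; ext ω; simp [he.eq_iff]
  set F : T → ℝ := fun t =>
    pr μ ((fun ω => e (f ω)) ⁻¹' {t}) * Real.log (pr μ ((fun ω => e (f ω)) ⁻¹' {t})) with hF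
  calc ∑ t : T, F t = ∑ t ∈ Finset.univ.image e, F t := by
        refine (Finset.sum_subset (Finset.subset_univ _) ?_).symm
        intro t _ ht
        have : (fun ω => e (f ω)) ⁻¹' {t} = ∅ := by
          ext ω
          simp only [Set.mem_preimage, Set.mem_singleton_iff, Set.mem_empty_iff_false, iff_false]
          intro h; exact ht (by simp [← h])
        simp [hF, this, pr_empty]
    _ = ∑ s : S, F (e s) := Finset.sum_image (fun x _ y _ h => he h)
    _ = ∑ s : S, pr μ (f ⁻¹' {s}) * Real.log (pr μ (f ⁻¹' {s})) := by
        simp only [hF, hpre]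

end AuxLemmas
set_option linter.unusedSectionVars false

section AuxLemmas2

variable {Ω : Type*} [MeasurableSpace Ω]

lemma condH_comp_inj {S T T' : Type*} [Fintype S] [Fintype T] [Fintype T'] (μ : Measure Ω)
    (U : Ω → S) (V : Ω → T) {e : T → T'} (he : Function.Injective e) :
    condH μ U (fun ω => e (V ω)) = condH μ U V := by
  unfold condH
  have h1 : entH μ (fun ω => (U ω, e (V ω))) = entH μ (fun ω => (U ω, V ω)) := by
    have : (fun ω => (U ω, e (V ω))) =
        (fun ω => (Prod.map (id : S → S) e) ((fun ω' => (U ω', V ω')) ω)) := rfl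
    have hinj : Function.Injective (Prod.map (id : S → S) e) := by
      rintro ⟨a, b⟩ ⟨a', b'⟩ hp
      simp only [Prod.map, Prod.mk.injEq, id] at hp
      exact Prod.ext_iff.mpr ⟨hp.1, he hp.2⟩
    rw [this, entH_comp_inj μ _ hinj]
  have h2 : entH μ (fun ω => e (V ω)) = entH μ V := entH_comp_inj μ V he
  rw [h1, h2]

lemma condIndep_of_comp_left {S S' T U : Type*} {μ : Measure Ω} {A : Ω → S} {W : Ω → T}
    {G : Ω → U} {e : S → S'} (he : Function.Injective e)
    (h : CondIndep μ (fun ω => e (A ω)) W G) : CondIndep μ A W G := by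
  intro a w g
  have hset : (fun ω => e (A ω)) ⁻¹' {e a} = A ⁻¹' {a} := by ext ω; simp [he.eq_iff]
  have := h (e a) w g
  rwa [hset] at this

lemma cmi_eq_condH_sub {SA SB SC : Type*} [Fintype SA] [Fintype SB] [Fintype SC]
    (μ : Measure Ω) (Av : Ω → SA) (Bv : Ω → SB) (Cv : Ω → SC) :
    cmi μ Av Bv Cv = condH μ Av Cv - condH μ Av (fun ω => (Bv ω, Cv ω)) := by
  unfold cmi
  have hassoc : entH μ (fun ω => ((Av ω, Bv ω), Cv ω)) =
      entH μ (fun ω => (Av ω, (Bv ω, Cv ω))) := by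
    have : (fun ω => (Av ω, (Bv ω, Cv ω))) =
        (fun ω => (Equiv.prodAssoc SA SB SC) ((fun ω' => ((Av ω', Bv ω'), Cv ω')) ω)) := rfl
    rw [this, entH_comp_inj μ _ (Equiv.prodAssoc SA SB SC).injective]
  unfold condH
  rw [hassoc]
  ring

end AuxLemmas2
section AuxLemmas3

variable {Ω : Type*} [MeasurableSpace Ω]

/-- If `(A,B) ⊥ W | G` then `A ⊥ W | (G,B)`. -/
lemma condIndep_pair_cond {SA SB T U : Type*} [Fintype SA]
    [MeasurableSpace SA] [MeasurableSingletonClass SA]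
    [MeasurableSpace SB] [MeasurableSingletonClass SB]
    [MeasurableSpace T] [MeasurableSingletonClass T]
    [MeasurableSpace U] [MeasurableSingletonClass U]
    {μ : Measure Ω} [IsProbabilityMeasure μ]
    {A : Ω → SA} {B : Ω → SB} {W : Ω → T} {G : Ω → U}
    (hA : Measurable A) (hB : Measurable B) (hW : Measurable W) (hG : Measurable G)
    (h : CondIndep μ (fun ω => (A ω, B ω)) W G) :
    CondIndep μ A W (fun ω => (G ω, B ω)) := by
  rintro a w ⟨g, b⟩
  -- abbreviations for events
  set Ea := A ⁻¹' {a} with hEa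
  set Eb := B ⁻¹' {b} with hEb
  set Ew := W ⁻¹' {w} with hEw
  set Eg := G ⁻¹' {g} with hEg
  have hGB : (fun ω => (G ω, B ω)) ⁻¹' {(g, b)} = Eg ∩ Eb := pair_preimage G B g b
  rw [hGB]
  -- from h at (a, b):
  have h1 := h (a, b) w g
  rw [pair_preimage A B a b] at h1
  simp only [← hEa, ← hEb, ← hEw, ← hEg] at h1
  -- h1 : pr ((Ea ∩ Eb) ∩ Ew ∩ Eg) * pr Eg = pr ((Ea ∩ Eb) ∩ Eg) * pr (Ew ∩ Eg)
  -- summing h over all a' gives W ⊥ B | G: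
  have hWB : pr μ (Eb ∩ Ew ∩ Eg) * pr μ Eg = pr μ (Eb ∩ Eg) * pr μ (Ew ∩ Eg) := by
    have hsum1 : pr μ (Eb ∩ Ew ∩ Eg) = ∑ a' : SA, pr μ ((Eb ∩ Ew ∩ Eg) ∩ A ⁻¹' {a'}) :=
      pr_sum_fiber
        (((hB (measurableSet_singleton b)).inter (hW (measurableSet_singleton w))).inter
          (hG (measurableSet_singleton g))) hA
    have hsum2 : pr μ (Eb ∩ Eg) = ∑ a' : SA, pr μ ((Eb ∩ Eg) ∩ A ⁻¹' {a'}) :=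
      pr_sum_fiber
        ((hB (measurableSet_singleton b)).inter (hG (measurableSet_singleton g))) hA
    rw [hsum1, hsum2, Finset.sum_mul, Finset.sum_mul]
    refine Finset.sum_congr rfl fun a' _ => ?_
    have h' := h (a', b) w g
    rw [pair_preimage A B a' b] at h'
    have e1 : (Eb ∩ Ew ∩ Eg) ∩ A ⁻¹' {a'} = (A ⁻¹' {a'} ∩ Eb) ∩ Ew ∩ Eg := by
      ext ω; simp only [Set.mem_inter_iff, Set.mem_preimage]; tauto
    have e2 : (Eb ∩ Eg) ∩ A ⁻¹' {a'} = (A ⁻¹' {a'} ∩ Eb) ∩ Eg := by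
      ext ω; simp only [Set.mem_inter_iff, Set.mem_preimage]; tauto
    rw [e1, e2, h']
  -- set algebra for the goal
  have e3 : Ea ∩ Ew ∩ (Eg ∩ Eb) = (Ea ∩ Eb) ∩ Ew ∩ Eg := by
    ext ω; simp only [Set.mem_inter_iff]; tauto
  have e4 : Ea ∩ (Eg ∩ Eb) = (Ea ∩ Eb) ∩ Eg := by
    ext ω; simp only [Set.mem_inter_iff]; tauto
  have e5 : Ew ∩ (Eg ∩ Eb) = Eb ∩ Ew ∩ Eg := by
    ext ω; simp only [Set.mem_inter_iff]; tauto
  rw [e3, e4, e5]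
  by_cases hg : pr μ Eg = 0
  · have z1 : pr μ ((Ea ∩ Eb) ∩ Ew ∩ Eg) = 0 :=
      pr_mono_null (by intro ω hω; exact hω.2) hg
    have z2 : pr μ (Eg ∩ Eb) = 0 := pr_mono_null Set.inter_subset_left hg
    have z3 : pr μ ((Ea ∩ Eb) ∩ Eg) = 0 := pr_mono_null Set.inter_subset_right hg
    have z4 : pr μ (Eb ∩ Ew ∩ Eg) = 0 := pr_mono_null Set.inter_subset_right hg
    rw [z1, z3, z4]; ring
  · apply mul_right_cancel₀ hg
    have hgb : pr μ (Eg ∩ Eb) = pr μ (Eb ∩ Eg) := by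
      rw [Set.inter_comm]
    rw [hgb]
    linear_combination pr μ (Eb ∩ Eg) * h1 - pr μ ((Ea ∩ Eb) ∩ Eg) * hWB

end AuxLemmas3
section AuxLemmas4

variable {Ω : Type*} [MeasurableSpace Ω]

/-- If `U ⊥ W | G` then `H(U | G, W) = H(U | G)`. -/
lemma condH_pair_eq_of_condIndep {SU SG ST : Type*} [Fintype SU] [Fintype SG] [Fintype ST]
    [MeasurableSpace SU] [MeasurableSingletonClass SU]
    [MeasurableSpace SG] [MeasurableSingletonClass SG]
    [MeasurableSpace ST] [MeasurableSingletonClass ST]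
    {μ : Measure Ω} [IsProbabilityMeasure μ]
    {U : Ω → SU} {W : Ω → ST} {G : Ω → SG}
    (hU : Measurable U) (hW : Measurable W) (hG : Measurable G)
    (h : CondIndep μ U W G) :
    condH μ U (fun ω => (G ω, W ω)) = condH μ U G := by
  classical
  set p3 : SU → SG → ST → ℝ :=
    fun u g w => pr μ (U ⁻¹' {u} ∩ (G ⁻¹' {g} ∩ W ⁻¹' {w})) with hp3
  set pUG : SU → SG → ℝ := fun u g => pr μ (U ⁻¹' {u} ∩ G ⁻¹' {g}) with hpUG
  set pGW : SG → ST → ℝ := fun g w => pr μ (G ⁻¹' {g} ∩ W ⁻¹' {w}) with hpGW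
  set pG : SG → ℝ := fun g => pr μ (G ⁻¹' {g}) with hpG
  have mU : ∀ u : SU, MeasurableSet (U ⁻¹' {u}) := fun u => hU (measurableSet_singleton u)
  have mW : ∀ w : ST, MeasurableSet (W ⁻¹' {w}) := fun w => hW (measurableSet_singleton w)
  have mG : ∀ g : SG, MeasurableSet (G ⁻¹' {g}) := fun g => hG (measurableSet_singleton g)
  -- marginalization identities
  have mUG : ∀ u g, pUG u g = ∑ w : ST, p3 u g w := by
    intro u g
    rw [hpUG]
    simp only
    rw [pr_sum_fiber ((mU u).inter (mG g)) hW]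
    exact Finset.sum_congr rfl fun w _ => by rw [Set.inter_assoc]
  have mGW : ∀ g w, pGW g w = ∑ u : SU, p3 u g w := by
    intro g w
    rw [hpGW]
    simp only
    rw [pr_sum_fiber ((mG g).inter (mW w)) hU]
    exact Finset.sum_congr rfl fun u _ => by rw [Set.inter_comm]
  have mGsum : ∀ g, pG g = ∑ w : ST, pGW g w := by
    intro g
    rw [hpG]; simp only
    exact pr_sum_fiber (mG g) hW
  -- the termwise identity from conditional independence
  have key : ∀ u g w, p3 u g w * Real.log (p3 u g w)
      = p3 u g w * Real.log (pUG u g) + p3 u g w * Real.log (pGW g w)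
        - p3 u g w * Real.log (pG g) := by
    intro u g w
    by_cases h0 : p3 u g w = 0
    · rw [h0]; ring
    · have hpos : 0 < p3 u g w := lt_of_le_of_ne (pr_nonneg μ _) (Ne.symm h0)
      have hle1 : p3 u g w ≤ pUG u g := by
        apply pr_le; rintro ω ⟨h1, h2, _⟩; exact ⟨h1, h2⟩
      have hle2 : p3 u g w ≤ pGW g w := pr_le Set.inter_subset_right
      have hle3 : p3 u g w ≤ pG g := by
        apply pr_le; rintro ω ⟨_, h2, _⟩; exact h2
      have h1 : 0 < pUG u g := lt_of_lt_of_le hpos hle1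
      have h2 : 0 < pGW g w := lt_of_lt_of_le hpos hle2
      have h3 : 0 < pG g := lt_of_lt_of_le hpos hle3
      have hci := h u w g
      have eA : U ⁻¹' {u} ∩ W ⁻¹' {w} ∩ G ⁻¹' {g} = U ⁻¹' {u} ∩ (G ⁻¹' {g} ∩ W ⁻¹' {w}) := by
        ext ω; simp only [Set.mem_inter_iff]; tauto
      have eB : W ⁻¹' {w} ∩ G ⁻¹' {g} = G ⁻¹' {g} ∩ W ⁻¹' {w} := Set.inter_comm _ _
      rw [eA, eB] at hci
      -- hci : p3 u g w * pG g = pUG u g * pGW g w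
      have hp3eq : p3 u g w = pUG u g * pGW g w / pG g := by
        field_simp
        linarith [hci]
      have hlog : Real.log (p3 u g w)
          = Real.log (pUG u g) + Real.log (pGW g w) - Real.log (pG g) := by
        rw [hp3eq, Real.log_div (mul_ne_zero h1.ne' h2.ne') h3.ne',
          Real.log_mul h1.ne' h2.ne']
      rw [hlog]; ring
  -- sum identity
  have main : ∑ u : SU, ∑ g : SG, ∑ w : ST, p3 u g w * Real.log (p3 u g w)
      = (∑ u : SU, ∑ g : SG, pUG u g * Real.log (pUG u g))
        + (∑ g : SG, ∑ w : ST, pGW g w * Real.log (pGW g w))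
        - ∑ g : SG, pG g * Real.log (pG g) := by
    have T1 : ∑ u : SU, ∑ g : SG, ∑ w : ST, p3 u g w * Real.log (pUG u g)
        = ∑ u : SU, ∑ g : SG, pUG u g * Real.log (pUG u g) := by
      refine Finset.sum_congr rfl fun u _ => Finset.sum_congr rfl fun g _ => ?_
      rw [← Finset.sum_mul, ← mUG]
    have T2 : ∑ u : SU, ∑ g : SG, ∑ w : ST, p3 u g w * Real.log (pGW g w)
        = ∑ g : SG, ∑ w : ST, pGW g w * Real.log (pGW g w) := by
      rw [Finset.sum_comm]
      refine Finset.sum_congr rfl fun g _ => ?_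
      rw [Finset.sum_comm]
      refine Finset.sum_congr rfl fun w _ => ?_
      rw [← Finset.sum_mul, ← mGW]
    have T3 : ∑ u : SU, ∑ g : SG, ∑ w : ST, p3 u g w * Real.log (pG g)
        = ∑ g : SG, pG g * Real.log (pG g) := by
      rw [Finset.sum_comm]
      refine Finset.sum_congr rfl fun g _ => ?_
      have : ∑ u : SU, ∑ w : ST, p3 u g w * Real.log (pG g)
          = (∑ u : SU, ∑ w : ST, p3 u g w) * Real.log (pG g) := by
        rw [Finset.sum_mul]
        exact Finset.sum_congr rfl fun u _ => by rw [Finset.sum_mul]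
      rw [this]
      congr 1
      rw [mGsum g]
      rw [Finset.sum_comm]
      exact Finset.sum_congr rfl fun w _ => (mGW g w).symm
    calc ∑ u : SU, ∑ g : SG, ∑ w : ST, p3 u g w * Real.log (p3 u g w)
        = ∑ u : SU, ∑ g : SG, ∑ w : ST,
            (p3 u g w * Real.log (pUG u g) + p3 u g w * Real.log (pGW g w)
              - p3 u g w * Real.log (pG g)) := by
          exact Finset.sum_congr rfl fun u _ => Finset.sum_congr rfl fun g _ =>
            Finset.sum_congr rfl fun w _ => key u g w
      _ = (∑ u : SU, ∑ g : SG, ∑ w : ST, p3 u g w * Real.log (pUG u g))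
            + (∑ u : SU, ∑ g : SG, ∑ w : ST, p3 u g w * Real.log (pGW g w))
            - ∑ u : SU, ∑ g : SG, ∑ w : ST, p3 u g w * Real.log (pG g) := by
          simp only [Finset.sum_add_distrib, Finset.sum_sub_distrib]
      _ = _ := by rw [T1, T2, T3]
  -- translate entropies
  have E3 : entH μ (fun ω => (U ω, (G ω, W ω)))
      = -∑ u : SU, ∑ g : SG, ∑ w : ST, p3 u g w * Real.log (p3 u g w) := by
    unfold entH
    rw [Fintype.sum_prod_type]
    congr 1
    refine Finset.sum_congr rfl fun u _ => ?_
    rw [Fintype.sum_prod_type]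
    refine Finset.sum_congr rfl fun g _ => Finset.sum_congr rfl fun w _ => ?_
    rw [pair_preimage U (fun ω => (G ω, W ω)) u (g, w), pair_preimage G W g w]
  have EUG : entH μ (fun ω => (U ω, G ω))
      = -∑ u : SU, ∑ g : SG, pUG u g * Real.log (pUG u g) := by
    unfold entH
    rw [Fintype.sum_prod_type]
    congr 1
    refine Finset.sum_congr rfl fun u _ => Finset.sum_congr rfl fun g _ => ?_
    rw [pair_preimage U G u g]
  have EGW : entH μ (fun ω => (G ω, W ω))
      = -∑ g : SG, ∑ w : ST, pGW g w * Real.log (pGW g w) := by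
    unfold entH
    rw [Fintype.sum_prod_type]
    congr 1
    refine Finset.sum_congr rfl fun g _ => Finset.sum_congr rfl fun w _ => ?_
    rw [pair_preimage G W g w]
  have EG : entH μ G = -∑ g : SG, pG g * Real.log (pG g) := rfl
  unfold condH
  rw [E3, EGW, EUG, EG, main]
  ring

end AuxLemmas4
section Injections

/-- Pack `((Y,Z)-block of length k, Z_0)` into `(Y-block of length k, Z-block of length k+1)`. -/
def e1A (k : ℕ) {B C : Type*} : (Fin k → B × C) × C → (Fin k → B) × (Fin (k + 1) → C) :=
  fun p => (fun i => (p.1 i).1,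
    fun i => if h : (i : ℕ) < k then (p.1 ⟨i, h⟩).2 else p.2)

lemma e1A_inj (k : ℕ) {B C : Type*} : Function.Injective (e1A k (B := B) (C := C)) := by
  have : Function.LeftInverse
      (fun q : (Fin k → B) × (Fin (k + 1) → C) =>
        ((fun i : Fin k => (q.1 i, q.2 ⟨i, by have := i.isLt; omega⟩)),
          q.2 ⟨k, by omega⟩)) (e1A k) := by
    rintro ⟨f, c⟩
    refine Prod.ext ?_ ?_
    · funext i
      simp only [e1A]
      rw [dif_pos i.isLt]
    · simp only [e1A]
      rw [dif_neg (by omega)]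
  exact this.injective

/-- Pack `(((Y,Z)-block_k, Z_0), (Y,Z)-block_m)` into `(Y-block_{k+m}, Z-block_{k+m+1})`. -/
def e2A (k m : ℕ) {B C : Type*} :
    ((Fin k → B × C) × C) × (Fin m → B × C) → (Fin (k + m) → B) × (Fin (k + m + 1) → C) :=
  fun p =>
    (fun i => if h : (i : ℕ) < m then (p.2 ⟨i, h⟩).1
      else (p.1.1 ⟨(i : ℕ) - m, by have := i.isLt; omega⟩).1,
     fun i => if h : (i : ℕ) < m then (p.2 ⟨i, h⟩).2
      else if h2 : (i : ℕ) < k + m then (p.1.1 ⟨(i : ℕ) - m, by omega⟩).2 else p.1.2)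

lemma e2A_inj (k m : ℕ) {B C : Type*} : Function.Injective (e2A k m (B := B) (C := C)) := by
  have : Function.LeftInverse
      (fun q : (Fin (k + m) → B) × (Fin (k + m + 1) → C) =>
        (((fun i : Fin k => (q.1 ⟨m + i, by have := i.isLt; omega⟩,
            q.2 ⟨m + i, by have := i.isLt; omega⟩)),
          q.2 ⟨k + m, by omega⟩),
         fun i : Fin m => (q.1 ⟨i, by have := i.isLt; omega⟩,
            q.2 ⟨i, by have := i.isLt; omega⟩))) (e2A k m) := by
    rintro ⟨⟨f, c⟩, g⟩
    refine Prod.ext (Prod.ext ?_ ?_) ?_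
    · funext i
      have hi := i.isLt
      simp only [e2A]
      rw [dif_neg (by omega), dif_neg (by omega), dif_pos (by omega)]
      have harg : ∀ (p : m + (i : ℕ) - m < k), (⟨m + (i : ℕ) - m, p⟩ : Fin k) = i :=
        fun p => Fin.ext (by simp only [Fin.val_mk]; omega)
      rw [harg]
    · simp only [e2A]
      rw [dif_neg (by omega), dif_neg (by omega)]
    · funext i
      have hi := i.isLt
      simp only [e2A]
      rw [dif_pos (by omega), dif_pos (by omega)]
  exact this.injective

/-- Pack `((X,Y,Z)-block_k, (X_0, Z_0))` into `(X-block_{k+1}, (Y-block_k, Z-block_{k+1}))`. -/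
def e3A (k : ℕ) {A B C : Type*} :
    (Fin k → A × B × C) × (A × C) → (Fin (k + 1) → A) × ((Fin k → B) × (Fin (k + 1) → C)) :=
  fun p =>
    (fun i => if h : (i : ℕ) < k then (p.1 ⟨i, h⟩).1 else p.2.1,
     (fun i => (p.1 i).2.1,
      fun i => if h : (i : ℕ) < k then (p.1 ⟨i, h⟩).2.2 else p.2.2))

lemma e3A_inj (k : ℕ) {A B C : Type*} :
    Function.Injective (e3A k (A := A) (B := B) (C := C)) := by
  have : Function.LeftInverse
      (fun q : (Fin (k + 1) → A) × ((Fin k → B) × (Fin (k + 1) → C)) =>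
        ((fun i : Fin k => (q.1 ⟨i, by have := i.isLt; omega⟩, q.2.1 i,
            q.2.2 ⟨i, by have := i.isLt; omega⟩)),
         (q.1 ⟨k, by omega⟩, q.2.2 ⟨k, by omega⟩))) (e3A k) := by
    rintro ⟨f, a, c⟩
    refine Prod.ext ?_ ?_
    · funext i
      simp only [e3A]
      rw [dif_pos i.isLt, dif_pos i.isLt]
    · simp only [e3A]
      rw [dif_neg (by omega), dif_neg (by omega)]
  exact this.injective

/-- Pack `(((X,Y,Z)-block_k, (X_0,Z_0)), (X,Y,Z)-block_m)` into
`(X-block_{k+m+1}, (Y-block_{k+m}, Z-block_{k+m+1}))`. -/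
def e4A (k m : ℕ) {A B C : Type*} :
    ((Fin k → A × B × C) × (A × C)) × (Fin m → A × B × C) →
      (Fin (k + m + 1) → A) × ((Fin (k + m) → B) × (Fin (k + m + 1) → C)) :=
  fun p =>
    (fun i => if h : (i : ℕ) < m then (p.2 ⟨i, h⟩).1
      else if h2 : (i : ℕ) < k + m then (p.1.1 ⟨(i : ℕ) - m, by omega⟩).1 else p.1.2.1,
     (fun i => if h : (i : ℕ) < m then (p.2 ⟨i, h⟩).2.1
        else (p.1.1 ⟨(i : ℕ) - m, by have := i.isLt; omega⟩).2.1,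
      fun i => if h : (i : ℕ) < m then (p.2 ⟨i, h⟩).2.2
        else if h2 : (i : ℕ) < k + m then (p.1.1 ⟨(i : ℕ) - m, by omega⟩).2.2 else p.1.2.2))

lemma e4A_inj (k m : ℕ) {A B C : Type*} :
    Function.Injective (e4A k m (A := A) (B := B) (C := C)) := by
  have : Function.LeftInverse
      (fun q : (Fin (k + m + 1) → A) × ((Fin (k + m) → B) × (Fin (k + m + 1) → C)) =>
        (((fun i : Fin k => (q.1 ⟨m + i, by have := i.isLt; omega⟩,
            q.2.1 ⟨m + i, by have := i.isLt; omega⟩,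
            q.2.2 ⟨m + i, by have := i.isLt; omega⟩)),
          (q.1 ⟨k + m, by omega⟩, q.2.2 ⟨k + m, by omega⟩)),
         fun i : Fin m => (q.1 ⟨i, by have := i.isLt; omega⟩,
            q.2.1 ⟨i, by have := i.isLt; omega⟩,
            q.2.2 ⟨i, by have := i.isLt; omega⟩))) (e4A k m) := by
    rintro ⟨⟨f, a, c⟩, g⟩
    refine Prod.ext (Prod.ext ?_ ?_) ?_
    · funext i
      have hi := i.isLt
      simp only [e4A]
      rw [dif_neg (by omega), dif_pos (by omega), dif_neg (by omega),
        dif_neg (by omega), dif_pos (by omega)]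
      have harg : ∀ (p : m + (i : ℕ) - m < k), (⟨m + (i : ℕ) - m, p⟩ : Fin k) = i :=
        fun p => Fin.ext (by simp only [Fin.val_mk]; omega)
      rw [harg]
    · simp only [e4A]
      rw [dif_neg (by omega), dif_neg (by omega), dif_neg (by omega), dif_neg (by omega)]
    · funext i
      have hi := i.isLt
      simp only [e4A]
      rw [dif_pos (by omega), dif_pos (by omega), dif_pos (by omega)]
  exact this.injective

end Injections

/-- If `{(X_n,Y_n,Z_n)}` is a stationary Markov chain of order at most `k`
and `{(Y_n,Z_n)}` is also Markov of order at most `k`, then for every `j ≥ k`,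
`I(Y_0 ; X_{-k}^0 | Y_{-k}^{-1}, Z_{-k}^0) = I(Y_0 ; X_{-j}^0 | Y_{-j}^{-1}, Z_{-j}^0)`. -/
theorem cmi_block_eq_of_markov_of_markovYZ
    {Ω A B C : Type*} [MeasurableSpace Ω]
    [MeasurableSpace A] [MeasurableSpace B] [MeasurableSpace C]
    [Fintype A] [Fintype B] [Fintype C]
    [MeasurableSingletonClass A] [MeasurableSingletonClass B] [MeasurableSingletonClass C]
    (μ : Measure Ω) [IsProbabilityMeasure μ]
    (X : ℤ → Ω → A) (Y : ℤ → Ω → B) (Z : ℤ → Ω → C)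
    (hX : ∀ t, Measurable (X t)) (hY : ∀ t, Measurable (Y t)) (hZ : ∀ t, Measurable (Z t))
    (k : ℕ)
    (hstat : Stationary μ (fun t ω => (X t ω, Y t ω, Z t ω)))
    (hM : MarkovOrder μ (fun t ω => (X t ω, Y t ω, Z t ω)) k)
    (hYZ : MarkovOrder μ (fun t ω => (Y t ω, Z t ω)) k) :
    ∀ j : ℕ, k ≤ j →
      cmi μ (Y 0) (blkZ X (-(k : ℤ)) (k + 1))
          (fun ω => (blkZ Y (-(k : ℤ)) k ω, blkZ Z (-(k : ℤ)) (k + 1) ω)) =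
        cmi μ (Y 0) (blkZ X (-(j : ℤ)) (j + 1))
          (fun ω => (blkZ Y (-(j : ℤ)) j ω, blkZ Z (-(j : ℤ)) (j + 1) ω)) := by
  intro j hjk
  obtain ⟨m, rfl⟩ : ∃ m, j = k + m := ⟨j - k, by omega⟩
  -- helper congruence lemmas for the processes
  have hXt : ∀ (t t' : ℤ), t = t' → ∀ ω, X t ω = X t' ω := fun t t' h ω => by rw [h]
  have hYt : ∀ (t t' : ℤ), t = t' → ∀ ω, Y t ω = Y t' ω := fun t t' h ω => by rw [h]
  have hZt : ∀ (t t' : ℤ), t = t' → ∀ ω, Z t ω = Z t' ω := fun t t' h ω => by rw [h]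
  -- the conditioning blocks, in the index normal form of `MarkovOrder` at time 0
  -- YZ-side
  have hGkPm : Measurable (fun ω (i : Fin k) =>
      (Y (0 - (k : ℤ) + (i : ℕ)) ω, Z (0 - (k : ℤ) + (i : ℕ)) ω)) :=
    measurable_pi_lambda _ fun i => (hY _).prodMk (hZ _)
  have hWmPm : Measurable (fun ω (i : Fin m) =>
      (Y (0 - (k : ℤ) - (m : ℤ) + (i : ℕ)) ω, Z (0 - (k : ℤ) - (m : ℤ) + (i : ℕ)) ω)) :=
    measurable_pi_lambda _ fun i => (hY _).prodMk (hZ _)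
  have hYZ0 : CondIndep μ (fun ω => (Y 0 ω, Z 0 ω))
      (fun ω (i : Fin m) =>
        (Y (0 - (k : ℤ) - (m : ℤ) + (i : ℕ)) ω, Z (0 - (k : ℤ) - (m : ℤ) + (i : ℕ)) ω))
      (fun ω (i : Fin k) =>
        (Y (0 - (k : ℤ) + (i : ℕ)) ω, Z (0 - (k : ℤ) + (i : ℕ)) ω)) := hYZ 0 m
  have hYZdrop : CondIndep μ (Y 0)
      (fun ω (i : Fin m) =>
        (Y (0 - (k : ℤ) - (m : ℤ) + (i : ℕ)) ω, Z (0 - (k : ℤ) - (m : ℤ) + (i : ℕ)) ω))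
      (fun ω => ((fun i : Fin k =>
        (Y (0 - (k : ℤ) + (i : ℕ)) ω, Z (0 - (k : ℤ) + (i : ℕ)) ω)), Z 0 ω)) :=
    condIndep_pair_cond (hY 0) (hZ 0) hWmPm hGkPm hYZ0
  -- XYZ-side
  have hGkTm : Measurable (fun ω (i : Fin k) =>
      (X (0 - (k : ℤ) + (i : ℕ)) ω, Y (0 - (k : ℤ) + (i : ℕ)) ω, Z (0 - (k : ℤ) + (i : ℕ)) ω)) :=
    measurable_pi_lambda _ fun i => (hX _).prodMk ((hY _).prodMk (hZ _))
  have hWmTm : Measurable (fun ω (i : Fin m) =>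
      (X (0 - (k : ℤ) - (m : ℤ) + (i : ℕ)) ω, Y (0 - (k : ℤ) - (m : ℤ) + (i : ℕ)) ω,
        Z (0 - (k : ℤ) - (m : ℤ) + (i : ℕ)) ω)) :=
    measurable_pi_lambda _ fun i => (hX _).prodMk ((hY _).prodMk (hZ _))
  have hM0 : CondIndep μ (fun ω => (X 0 ω, Y 0 ω, Z 0 ω))
      (fun ω (i : Fin m) =>
        (X (0 - (k : ℤ) - (m : ℤ) + (i : ℕ)) ω, Y (0 - (k : ℤ) - (m : ℤ) + (i : ℕ)) ω,
          Z (0 - (k : ℤ) - (m : ℤ) + (i : ℕ)) ω))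
      (fun ω (i : Fin k) =>
        (X (0 - (k : ℤ) + (i : ℕ)) ω, Y (0 - (k : ℤ) + (i : ℕ)) ω,
          Z (0 - (k : ℤ) + (i : ℕ)) ω)) := hM 0 m
  have hM1 : CondIndep μ (fun ω => (Y 0 ω, (X 0 ω, Z 0 ω)))
      (fun ω (i : Fin m) =>
        (X (0 - (k : ℤ) - (m : ℤ) + (i : ℕ)) ω, Y (0 - (k : ℤ) - (m : ℤ) + (i : ℕ)) ω,
          Z (0 - (k : ℤ) - (m : ℤ) + (i : ℕ)) ω))
      (fun ω (i : Fin k) =>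
        (X (0 - (k : ℤ) + (i : ℕ)) ω, Y (0 - (k : ℤ) + (i : ℕ)) ω,
          Z (0 - (k : ℤ) + (i : ℕ)) ω)) := by
    refine condIndep_of_comp_left
      (e := fun p : B × (A × C) => ((p.2.1, p.1, p.2.2) : A × B × C)) ?_ hM0
    rintro ⟨b, a, c⟩ ⟨b', a', c'⟩ hp
    simp only [Prod.mk.injEq] at hp
    simp [hp.1, hp.2.1, hp.2.2]
  have hMdrop : CondIndep μ (Y 0)
      (fun ω (i : Fin m) =>
        (X (0 - (k : ℤ) - (m : ℤ) + (i : ℕ)) ω, Y (0 - (k : ℤ) - (m : ℤ) + (i : ℕ)) ω,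
          Z (0 - (k : ℤ) - (m : ℤ) + (i : ℕ)) ω))
      (fun ω => ((fun i : Fin k =>
        (X (0 - (k : ℤ) + (i : ℕ)) ω, Y (0 - (k : ℤ) + (i : ℕ)) ω,
          Z (0 - (k : ℤ) + (i : ℕ)) ω)), (X 0 ω, Z 0 ω))) :=
    condIndep_pair_cond (hY 0) ((hX 0).prodMk (hZ 0)) hWmTm hGkTm hM1
  -- rewrite both cmi's as differences of conditional entropies
  rw [cmi_eq_condH_sub, cmi_eq_condH_sub]
  -- (1) the first conditional entropy, k-version
  have HC_k : condH μ (Y 0)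
      (fun ω => (blkZ Y (-(k : ℤ)) k ω, blkZ Z (-(k : ℤ)) (k + 1) ω))
      = condH μ (Y 0) (fun ω => ((fun i : Fin k =>
          (Y (0 - (k : ℤ) + (i : ℕ)) ω, Z (0 - (k : ℤ) + (i : ℕ)) ω)), Z 0 ω)) := by
    have hfe : (fun ω => (blkZ Y (-(k : ℤ)) k ω, blkZ Z (-(k : ℤ)) (k + 1) ω))
        = fun ω => e1A k ((fun ω' => ((fun i : Fin k =>
          (Y (0 - (k : ℤ) + (i : ℕ)) ω', Z (0 - (k : ℤ) + (i : ℕ)) ω')), Z 0 ω')) ω) := by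
      funext ω
      refine Prod.ext ?_ ?_
      · funext i
        show Y (-(k : ℤ) + (i : ℕ)) ω = Y (0 - (k : ℤ) + (i : ℕ)) ω
        exact hYt _ _ (by first | omega | (push_cast; omega) | (simp only [Fin.val_mk]; omega) | (simp only [Fin.val_mk]; push_cast; omega) | (have := i.isLt; omega) | (have := i.isLt; push_cast; omega)) ω
      · funext i
        simp only [e1A, blkZ]
        by_cases hik : (i : ℕ) < k
        · rw [dif_pos hik]
          exact hZt _ _ (by first | omega | (push_cast; omega) | (simp only [Fin.val_mk]; omega) | (simp only [Fin.val_mk]; push_cast; omega) | (have := i.isLt; omega) | (have := i.isLt; push_cast; omega)) ω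
        · rw [dif_neg hik]
          exact hZt _ _ (by first | omega | (push_cast; omega) | (simp only [Fin.val_mk]; omega) | (simp only [Fin.val_mk]; push_cast; omega) | (have := i.isLt; omega) | (have := i.isLt; push_cast; omega)) ω
    rw [hfe, condH_comp_inj μ (Y 0) _ (e1A_inj k)]
  -- (2) the first conditional entropy, j-version
  have HC_j : condH μ (Y 0)
      (fun ω => (blkZ Y (-((k + m : ℕ) : ℤ)) (k + m) ω, blkZ Z (-((k + m : ℕ) : ℤ)) (k + m + 1) ω))
      = condH μ (Y 0) (fun ω => ((fun i : Fin k =>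
          (Y (0 - (k : ℤ) + (i : ℕ)) ω, Z (0 - (k : ℤ) + (i : ℕ)) ω)), Z 0 ω)) := by
    have hfe : (fun ω => (blkZ Y (-((k + m : ℕ) : ℤ)) (k + m) ω,
          blkZ Z (-((k + m : ℕ) : ℤ)) (k + m + 1) ω))
        = fun ω => e2A k m ((fun ω' =>
            (((fun i : Fin k =>
              (Y (0 - (k : ℤ) + (i : ℕ)) ω', Z (0 - (k : ℤ) + (i : ℕ)) ω')), Z 0 ω'),
             (fun i : Fin m =>
              (Y (0 - (k : ℤ) - (m : ℤ) + (i : ℕ)) ω',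
                Z (0 - (k : ℤ) - (m : ℤ) + (i : ℕ)) ω')))) ω) := by
      funext ω
      refine Prod.ext ?_ ?_
      · funext i
        simp only [e2A, blkZ]
        by_cases him : (i : ℕ) < m
        · rw [dif_pos him]
          exact hYt _ _ (by first | omega | (push_cast; omega) | (simp only [Fin.val_mk]; omega) | (simp only [Fin.val_mk]; push_cast; omega) | (have := i.isLt; omega) | (have := i.isLt; push_cast; omega)) ω
        · rw [dif_neg him]
          exact hYt _ _ (by first | omega | (push_cast; omega) | (simp only [Fin.val_mk]; omega) | (simp only [Fin.val_mk]; push_cast; omega) | (have := i.isLt; omega) | (have := i.isLt; push_cast; omega)) ω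
      · funext i
        simp only [e2A, blkZ]
        by_cases him : (i : ℕ) < m
        · rw [dif_pos him]
          exact hZt _ _ (by first | omega | (push_cast; omega) | (simp only [Fin.val_mk]; omega) | (simp only [Fin.val_mk]; push_cast; omega) | (have := i.isLt; omega) | (have := i.isLt; push_cast; omega)) ω
        · rw [dif_neg him]
          by_cases hikm : (i : ℕ) < k + m
          · rw [dif_pos hikm]
            exact hZt _ _ (by first | omega | (push_cast; omega) | (simp only [Fin.val_mk]; omega) | (simp only [Fin.val_mk]; push_cast; omega) | (have := i.isLt; omega) | (have := i.isLt; push_cast; omega)) ω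
          · rw [dif_neg hikm]
            exact hZt _ _ (by first | omega | (push_cast; omega) | (simp only [Fin.val_mk]; omega) | (simp only [Fin.val_mk]; push_cast; omega) | (have := i.isLt; omega) | (have := i.isLt; push_cast; omega)) ω
    rw [hfe, condH_comp_inj μ (Y 0) _ (e2A_inj k m),
      condH_pair_eq_of_condIndep (hY 0) hWmPm (hGkPm.prodMk (hZ 0)) hYZdrop]
  -- (3) the second conditional entropy, k-version
  have HD_k : condH μ (Y 0)
      (fun ω => (blkZ X (-(k : ℤ)) (k + 1) ω,
        (blkZ Y (-(k : ℤ)) k ω, blkZ Z (-(k : ℤ)) (k + 1) ω)))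
      = condH μ (Y 0) (fun ω => ((fun i : Fin k =>
          (X (0 - (k : ℤ) + (i : ℕ)) ω, Y (0 - (k : ℤ) + (i : ℕ)) ω,
            Z (0 - (k : ℤ) + (i : ℕ)) ω)), (X 0 ω, Z 0 ω))) := by
    have hfe : (fun ω => (blkZ X (-(k : ℤ)) (k + 1) ω,
          (blkZ Y (-(k : ℤ)) k ω, blkZ Z (-(k : ℤ)) (k + 1) ω)))
        = fun ω => e3A k ((fun ω' => ((fun i : Fin k =>
            (X (0 - (k : ℤ) + (i : ℕ)) ω', Y (0 - (k : ℤ) + (i : ℕ)) ω',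
              Z (0 - (k : ℤ) + (i : ℕ)) ω')), (X 0 ω', Z 0 ω'))) ω) := by
      funext ω
      refine Prod.ext ?_ (Prod.ext ?_ ?_)
      · funext i
        simp only [e3A, blkZ]
        by_cases hik : (i : ℕ) < k
        · rw [dif_pos hik]
          exact hXt _ _ (by first | omega | (push_cast; omega) | (simp only [Fin.val_mk]; omega) | (simp only [Fin.val_mk]; push_cast; omega) | (have := i.isLt; omega) | (have := i.isLt; push_cast; omega)) ω
        · rw [dif_neg hik]
          exact hXt _ _ (by first | omega | (push_cast; omega) | (simp only [Fin.val_mk]; omega) | (simp only [Fin.val_mk]; push_cast; omega) | (have := i.isLt; omega) | (have := i.isLt; push_cast; omega)) ω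
      · funext i
        show Y (-(k : ℤ) + (i : ℕ)) ω = Y (0 - (k : ℤ) + (i : ℕ)) ω
        exact hYt _ _ (by first | omega | (push_cast; omega) | (simp only [Fin.val_mk]; omega) | (simp only [Fin.val_mk]; push_cast; omega) | (have := i.isLt; omega) | (have := i.isLt; push_cast; omega)) ω
      · funext i
        simp only [e3A, blkZ]
        by_cases hik : (i : ℕ) < k
        · rw [dif_pos hik]
          exact hZt _ _ (by first | omega | (push_cast; omega) | (simp only [Fin.val_mk]; omega) | (simp only [Fin.val_mk]; push_cast; omega) | (have := i.isLt; omega) | (have := i.isLt; push_cast; omega)) ω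
        · rw [dif_neg hik]
          exact hZt _ _ (by first | omega | (push_cast; omega) | (simp only [Fin.val_mk]; omega) | (simp only [Fin.val_mk]; push_cast; omega) | (have := i.isLt; omega) | (have := i.isLt; push_cast; omega)) ω
    rw [hfe, condH_comp_inj μ (Y 0) _ (e3A_inj k)]
  -- (4) the second conditional entropy, j-version
  have HD_j : condH μ (Y 0)
      (fun ω => (blkZ X (-((k + m : ℕ) : ℤ)) (k + m + 1) ω,
        (blkZ Y (-((k + m : ℕ) : ℤ)) (k + m) ω, blkZ Z (-((k + m : ℕ) : ℤ)) (k + m + 1) ω)))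
      = condH μ (Y 0) (fun ω => ((fun i : Fin k =>
          (X (0 - (k : ℤ) + (i : ℕ)) ω, Y (0 - (k : ℤ) + (i : ℕ)) ω,
            Z (0 - (k : ℤ) + (i : ℕ)) ω)), (X 0 ω, Z 0 ω))) := by
    have hfe : (fun ω => (blkZ X (-((k + m : ℕ) : ℤ)) (k + m + 1) ω,
          (blkZ Y (-((k + m : ℕ) : ℤ)) (k + m) ω, blkZ Z (-((k + m : ℕ) : ℤ)) (k + m + 1) ω)))
        = fun ω => e4A k m ((fun ω' =>
            (((fun i : Fin k =>
              (X (0 - (k : ℤ) + (i : ℕ)) ω', Y (0 - (k : ℤ) + (i : ℕ)) ω',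
                Z (0 - (k : ℤ) + (i : ℕ)) ω')), (X 0 ω', Z 0 ω')),
             (fun i : Fin m =>
              (X (0 - (k : ℤ) - (m : ℤ) + (i : ℕ)) ω', Y (0 - (k : ℤ) - (m : ℤ) + (i : ℕ)) ω',
                Z (0 - (k : ℤ) - (m : ℤ) + (i : ℕ)) ω')))) ω) := by
      funext ω
      refine Prod.ext ?_ (Prod.ext ?_ ?_)
      · funext i
        simp only [e4A, blkZ]
        by_cases him : (i : ℕ) < m
        · rw [dif_pos him]
          exact hXt _ _ (by first | omega | (push_cast; omega) | (simp only [Fin.val_mk]; omega) | (simp only [Fin.val_mk]; push_cast; omega) | (have := i.isLt; omega) | (have := i.isLt; push_cast; omega)) ω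
        · rw [dif_neg him]
          by_cases hikm : (i : ℕ) < k + m
          · rw [dif_pos hikm]
            exact hXt _ _ (by first | omega | (push_cast; omega) | (simp only [Fin.val_mk]; omega) | (simp only [Fin.val_mk]; push_cast; omega) | (have := i.isLt; omega) | (have := i.isLt; push_cast; omega)) ω
          · rw [dif_neg hikm]
            exact hXt _ _ (by first | omega | (push_cast; omega) | (simp only [Fin.val_mk]; omega) | (simp only [Fin.val_mk]; push_cast; omega) | (have := i.isLt; omega) | (have := i.isLt; push_cast; omega)) ω
      · funext i
        simp only [e4A, blkZ]
        by_cases him : (i : ℕ) < m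
        · rw [dif_pos him]
          exact hYt _ _ (by first | omega | (push_cast; omega) | (simp only [Fin.val_mk]; omega) | (simp only [Fin.val_mk]; push_cast; omega) | (have := i.isLt; omega) | (have := i.isLt; push_cast; omega)) ω
        · rw [dif_neg him]
          exact hYt _ _ (by first | omega | (push_cast; omega) | (simp only [Fin.val_mk]; omega) | (simp only [Fin.val_mk]; push_cast; omega) | (have := i.isLt; omega) | (have := i.isLt; push_cast; omega)) ω
      · funext i
        simp only [e4A, blkZ]
        by_cases him : (i : ℕ) < m
        · rw [dif_pos him]
          exact hZt _ _ (by first | omega | (push_cast; omega) | (simp only [Fin.val_mk]; omega) | (simp only [Fin.val_mk]; push_cast; omega) | (have := i.isLt; omega) | (have := i.isLt; push_cast; omega)) ω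
        · rw [dif_neg him]
          by_cases hikm : (i : ℕ) < k + m
          · rw [dif_pos hikm]
            exact hZt _ _ (by first | omega | (push_cast; omega) | (simp only [Fin.val_mk]; omega) | (simp only [Fin.val_mk]; push_cast; omega) | (have := i.isLt; omega) | (have := i.isLt; push_cast; omega)) ω
          · rw [dif_neg hikm]
            exact hZt _ _ (by first | omega | (push_cast; omega) | (simp only [Fin.val_mk]; omega) | (simp only [Fin.val_mk]; push_cast; omega) | (have := i.isLt; omega) | (have := i.isLt; push_cast; omega)) ω
    rw [hfe, condH_comp_inj μ (Y 0) _ (e4A_inj k m),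
      condH_pair_eq_of_condIndep (hY 0) hWmTm (hGkTm.prodMk ((hX 0).prodMk (hZ 0))) hMdrop]
  rw [HC_k, HC_j, HD_k, HD_j]

end CCDI
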